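/- arXiv:2403.15645 — 4 statements merged into one kernel-verified Lean document; each statement's English description precedes it below -/
import Mathlib

section
/- Let n ≥ 3k−1 and k ≥ 2, and let X be a set of vertices of the Kneser graph KG(n,k). Then X is a total mutual-visibility set in KG(n,k) if and only if the k-uniform hypergraph on [n] whose edges are the k-sets corresponding to vertices outside X has transversal number at least 2k. -/
/-- A transversal of a hypergraph given by its edge set `E`: a vertex set
meeting every edge. -/
def IsTransversal {α : Type*} [DecidableEq α] (E : Finset (Finset α)) (T : Finset α) : Prop :=
  ∀ e ∈ E, (e ∩ T).Nonempty

/-- The transversal number: minimum cardinality of a transversal. -/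
noncomputable def transversalNum {α : Type*} [DecidableEq α] (E : Finset (Finset α)) : ℕ :=
  sInf {m | ∃ T : Finset α, IsTransversal E T ∧ T.card = m}

/-- Two vertices `u` and `v` are `X`-visible if some shortest `u,v`-path has
no internal vertex in `X`. -/
def XVisible {V : Type*} (G : SimpleGraph V) (X : Set V) (u v : V) : Prop :=
  ∃ p : G.Walk u v, p.length = G.dist u v ∧
    ∀ w ∈ p.support, w ∈ X → w = u ∨ w = v

/-- `X` is a total mutual-visibility set if every pair of vertices is `X`-visible. -/
def IsTotalMVSet {V : Type*} (G : SimpleGraph V) (X : Set V) : Prop :=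
  ∀ u v : V, XVisible G X u v

/-- `X` is a mutual-visibility set if every pair of vertices of `X` is `X`-visible. -/
def IsMVSet {V : Type*} (G : SimpleGraph V) (X : Set V) : Prop :=
  ∀ u ∈ X, ∀ v ∈ X, XVisible G X u v

/-- The total mutual-visibility number of a graph. -/
noncomputable def totalMVNumber {V : Type*} [Fintype V] (G : SimpleGraph V) : ℕ :=
  sSup {m | ∃ X : Finset V, IsTotalMVSet G ↑X ∧ X.card = m}

/-- The mutual-visibility number of a graph. -/
noncomputable def mvNumber {V : Type*} [Fintype V] (G : SimpleGraph V) : ℕ :=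
  sSup {m | ∃ X : Finset V, IsMVSet G ↑X ∧ X.card = m}

/-- The Kneser graph `KG(n,k)`: vertices are the `k`-subsets of `[n]`,
adjacent iff disjoint. -/
def KneserGraph (n k : ℕ) : SimpleGraph {A : Finset (Fin n) // A.card = k} where
  Adj A B := A ≠ B ∧ Disjoint A.1 B.1
  symm := ⟨fun A B h => ⟨h.1.symm, h.2.symm⟩⟩
  loopless := ⟨fun A h => h.1 rfl⟩

/-! Two distinct intersecting vertices `A`, `B` of `KG(n,k)` are at distance 2, and their
common neighbours are the `k`-sets disjoint from `A ∪ B`, which exist since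
`|A ∪ B| ≤ 2k - 1 ≤ n - k`. So `X` is a total mutual-visibility set iff for every such pair
some `k`-set outside `X` avoids `A ∪ B`. Every set of fewer than `2k` points lies in such a
union (one of size `2k - 1`, split into two `k`-sets sharing one point), so this says exactly
that no set of fewer than `2k` points is a transversal of `F(X̄)`. -/

namespace Finset

variable {α : Type*} [DecidableEq α]

lemma exists_ne_not_disjoint_union_eq_of_card_eq {S : Finset α} {k : ℕ} (hk : 2 ≤ k)
    (hS : S.card = 2 * k - 1) :
    ∃ A B : Finset α,
      A.card = k ∧ B.card = k ∧ A ≠ B ∧ ¬ Disjoint A B ∧ A ∪ B = S := by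
  obtain ⟨A, hAS, hA⟩ := S.exists_subset_card_eq (n := k) (by omega)
  have hrest : (S \ A).card = k - 1 := by rw [card_sdiff_of_subset hAS]; omega
  obtain ⟨x, hxA⟩ := card_pos.mp (show 0 < A.card by omega)
  obtain ⟨y, hy⟩ := card_pos.mp (show 0 < (S \ A).card by omega)
  have hxrest : x ∉ S \ A := fun h => (mem_sdiff.mp h).2 hxA
  refine ⟨A, insert x (S \ A), hA, by rw [card_insert_of_notMem hxrest]; omega, ?_, ?_, ?_⟩
  · rintro h
    exact (mem_sdiff.mp hy).2 (h ▸ mem_insert_of_mem hy)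
  · exact not_disjoint_iff.mpr ⟨x, hxA, mem_insert_self x _⟩
  · rw [union_insert, union_sdiff_of_subset hAS, insert_eq_of_mem (hAS hxA)]

end Finset

section Transversal

variable {α : Type*} [DecidableEq α] {E : Finset (Finset α)}

/-- Without `hE` there may be no transversal at all, and then `transversalNum E = sInf ∅ = 0`. -/
lemma le_transversalNum_iff [Fintype α] (hE : ∀ e ∈ E, e.Nonempty) {m : ℕ} :
    m ≤ transversalNum E ↔ ∀ T : Finset α, T.card < m → ∃ e ∈ E, Disjoint e T := by
  have hne : {m | ∃ T : Finset α, IsTransversal E T ∧ T.card = m}.Nonempty :=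
    ⟨_, Finset.univ, fun e he => by simpa using hE e he, rfl⟩
  rw [transversalNum, le_csInf_iff (OrderBot.bddBelow _) hne]
  simp only [Set.mem_ofPred_eq, forall_exists_index, and_imp, IsTransversal]
  refine ⟨fun h T hT => ?_, fun h _ T hT hm => ?_⟩
  · by_contra! hdisj
    exact hT.not_ge (h _ T (fun e he => Finset.not_disjoint_iff_nonempty_inter.mp
      (hdisj e he)) rfl)
  · by_contra! hlt
    obtain ⟨e, he, hdisj⟩ := h T (hm ▸ hlt)
    exact Finset.not_disjoint_iff_nonempty_inter.mpr (hT e he) hdisj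

end Transversal

section Visibility

variable {V : Type*} {G : SimpleGraph V} {X : Set V} {u v : V}

lemma SimpleGraph.dist_eq_two_iff :
    G.dist u v = 2 ↔ u ≠ v ∧ ¬ G.Adj u v ∧ (G.commonNeighbors u v).Nonempty := by
  rw [← edist_eq_two_iff, SimpleGraph.dist]
  cases G.edist u v
  · simp
  · simp only [ENat.toNat_natCast]
    norm_cast

lemma xVisible_self (G : SimpleGraph V) (X : Set V) (u : V) : XVisible G X u u :=
  ⟨.nil, by simp, by simp⟩

lemma SimpleGraph.Adj.xVisible (h : G.Adj u v) : XVisible G X u v :=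
  ⟨h.toWalk, by simp [SimpleGraph.dist_eq_one_iff_adj.mpr h], by simp⟩

lemma xVisible_iff_of_dist_eq_two (h : G.dist u v = 2) :
    XVisible G X u v ↔ ∃ c ∈ G.commonNeighbors u v, c ∉ X := by
  constructor
  · rintro ⟨p, hp, hpX⟩
    rw [h] at hp
    have huc : G.Adj u (p.getVert 1) := by
      simpa using p.adj_getVert_succ (i := 0) (by omega)
    have hv : p.getVert 2 = v := by rw [← hp, p.getVert_length]
    have hcv : G.Adj (p.getVert 1) v := by
      simpa [hv] using p.adj_getVert_succ (i := 1) (by omega)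
    refine ⟨_, ⟨huc, hcv.symm⟩, fun hcX => ?_⟩
    rcases hpX _ (p.getVert_mem_support 1) hcX with hcu | hcv'
    · exact huc.ne hcu.symm
    · exact hcv.ne hcv'
  · rintro ⟨c, hc, hcX⟩
    obtain ⟨huc, hvc⟩ := G.mem_commonNeighbors.mp hc
    refine ⟨.cons huc (.cons hvc.symm .nil), by simp [h], fun w hw hwX => ?_⟩
    simp only [SimpleGraph.Walk.support_cons, SimpleGraph.Walk.support_nil,
      List.mem_cons, List.not_mem_nil, or_false] at hw
    rcases hw with rfl | rfl | rfl
    · exact .inl rfl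
    · exact absurd hwX hcX
    · exact .inr rfl

end Visibility

section Kneser

variable {n k : ℕ} {A B C : {A : Finset (Fin n) // A.card = k}}

lemma kneserGraph_adj_iff (hk : 0 < k) : (KneserGraph n k).Adj A B ↔ Disjoint A.1 B.1 := by
  refine ⟨And.right, fun h => ⟨fun hAB => ?_, h⟩⟩
  subst hAB
  have := A.2
  rw [(Finset.disjoint_self_iff_empty _).mp h, Finset.card_empty] at this
  omega

lemma kneserGraph_mem_commonNeighbors_iff (hk : 0 < k) :
    C ∈ (KneserGraph n k).commonNeighbors A B ↔ Disjoint C.1 (A.1 ∪ B.1) := by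
  rw [SimpleGraph.mem_commonNeighbors, kneserGraph_adj_iff hk, kneserGraph_adj_iff hk,
    Finset.disjoint_union_right, disjoint_comm (a := A.1), disjoint_comm (a := B.1)]

lemma card_union_lt_two_mul_of_not_disjoint (h : ¬ Disjoint A.1 B.1) :
    (A.1 ∪ B.1).card < 2 * k := by
  have := (Finset.card_union_le A.1 B.1).lt_of_ne (mt Finset.card_union_eq_card_add_card.mp h)
  rwa [A.2, B.2, ← two_mul] at this

lemma kneserGraph_dist_eq_two (hk : 0 < k) (hn : 3 * k - 1 ≤ n) (hAB : A ≠ B)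
    (h : ¬ Disjoint A.1 B.1) : (KneserGraph n k).dist A B = 2 := by
  refine SimpleGraph.dist_eq_two_iff.mpr
    ⟨hAB, fun hadj => h ((kneserGraph_adj_iff hk).mp hadj), ?_⟩
  have hunion := card_union_lt_two_mul_of_not_disjoint h
  obtain ⟨c, hc, hck⟩ := (A.1 ∪ B.1)ᶜ.exists_subset_card_eq (n := k)
    (by rw [Finset.card_compl, Fintype.card_fin]; omega)
  exact ⟨⟨c, hck⟩, (kneserGraph_mem_commonNeighbors_iff hk).mpr
    (Finset.subset_compl_iff_disjoint_right.mp hc)⟩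

lemma isTotalMVSet_kneserGraph_iff (hk : 0 < k) (hn : 3 * k - 1 ≤ n)
    {X : Set {A : Finset (Fin n) // A.card = k}} :
    IsTotalMVSet (KneserGraph n k) X ↔ ∀ A B : {A : Finset (Fin n) // A.card = k},
      A ≠ B → ¬ Disjoint A.1 B.1 → ∃ C ∉ X, Disjoint C.1 (A.1 ∪ B.1) := by
  constructor
  · intro hX A B hAB h
    obtain ⟨C, hC, hCX⟩ :=
      (xVisible_iff_of_dist_eq_two (kneserGraph_dist_eq_two hk hn hAB h)).mp (hX A B)
    exact ⟨C, hCX, (kneserGraph_mem_commonNeighbors_iff hk).mp hC⟩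
  · intro hX A B
    rcases eq_or_ne A B with rfl | hAB
    · exact xVisible_self _ _ A
    by_cases h : Disjoint A.1 B.1
    · exact ((kneserGraph_adj_iff hk).mpr h).xVisible
    obtain ⟨C, hCX, hC⟩ := hX A B hAB h
    exact (xVisible_iff_of_dist_eq_two (kneserGraph_dist_eq_two hk hn hAB h)).mpr
      ⟨C, (kneserGraph_mem_commonNeighbors_iff hk).mpr hC, hCX⟩

end Kneser

/-- For `n ≥ 3k - 1`, a vertex set `X` of `KG(n,k)` is a total
mutual-visibility set iff the hypergraph of the `k`-sets outside `X` has
transversal number at least `2k`. -/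
theorem kneser_totalMV_iff_transversal (n k : ℕ) (hk : 2 ≤ k) (hn : 3 * k - 1 ≤ n)
    (X : Finset {A : Finset (Fin n) // A.card = k}) :
    IsTotalMVSet (KneserGraph n k) ↑X ↔
      2 * k ≤ transversalNum ((Finset.univ \ X).image fun v => v.1) := by
  have hedges : ∀ e ∈ (Finset.univ \ X).image fun v => v.1, e.Nonempty := by
    simp only [Finset.mem_image]
    rintro _ ⟨C, -, rfl⟩
    exact Finset.card_pos.mp (by omega)
  simp only [isTotalMVSet_kneserGraph_iff (by omega) hn, le_transversalNum_iff hedges,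
    Finset.exists_mem_image, Finset.mem_sdiff, Finset.mem_univ, true_and, Finset.mem_coe]
  constructor
  · intro h T hT
    obtain ⟨S, hTS, -, hS⟩ := Finset.exists_subsuperset_card_eq (Finset.subset_univ T)
      (n := 2 * k - 1) (by omega) (by simp; omega)
    obtain ⟨A, B, hA, hB, hAB, hAB', rfl⟩ :=
      Finset.exists_ne_not_disjoint_union_eq_of_card_eq hk hS
    obtain ⟨C, hCX, hC⟩ := h ⟨A, hA⟩ ⟨B, hB⟩ (by simpa using hAB) hAB'
    exact ⟨C, hCX, hC.mono_right hTS⟩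
  · exact fun h A B _ hAB => h _ (card_union_lt_two_mul_of_not_disjoint hAB)
end

section
/- If 2k+1 ≤ n ≤ 3k−1 and k ≥ 2, then the total mutual-visibility number of the Kneser graph KG(n,k) equals 0. -/
/-!
Fix `x ∈ X` and write its complement `[n] \ x`, of size `n - k` with `k < n - k < 2k`, as the union
of two `k`-sets `u ≠ v`. They meet, so they are not adjacent, and both are adjacent to `x`; any common
neighbour of `u` and `v` avoids `u ∪ v`, hence lies inside `x` and equals `x`. So `d(u, v) = 2` and every
shortest `u,v`-path passes through `x ∈ X`: no nonempty set is a total mutual-visibility set.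
-/

open Finset SimpleGraph

theorem Finset.exists_card_eq_card_eq_union_eq {α : Type*} [DecidableEq α] {C : Finset α} {k : ℕ}
    (h₁ : k ≤ #C) (h₂ : #C ≤ 2 * k) : ∃ u v : Finset α, #u = k ∧ #v = k ∧ u ∪ v = C := by
  obtain ⟨u, huC, hu⟩ := exists_subset_card_eq h₁
  obtain ⟨v, hCv, hvC, hv⟩ := exists_subsuperset_card_eq (sdiff_subset (s := C) (t := u))
    (by rw [card_sdiff_of_subset huC]; omega) h₁
  refine ⟨u, v, hu, hv, (union_subset huC hvC).antisymm fun a ha => ?_⟩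
  by_cases hau : a ∈ u
  · exact mem_union_left _ hau
  · exact mem_union_right _ (hCv (mem_sdiff.2 ⟨ha, hau⟩))

theorem not_xVisible_of_edist_eq_two {V : Type*} {G : SimpleGraph V} {X : Set V} {u v : V}
    (h : G.edist u v = 2) (hX : G.commonNeighbors u v ⊆ X) : ¬ XVisible G X u v := by
  rintro ⟨p, hp, hpX⟩
  have hlen : p.length = 2 := by rw [hp, SimpleGraph.dist, h]; rfl
  set m := p.getVert 1
  have hum : G.Adj u m := by simpa using p.adj_getVert_succ (i := 0) (by omega)
  have hmv : G.Adj m v := by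
    simpa [← hlen, Walk.getVert_length] using p.adj_getVert_succ (i := 1) (by omega)
  rcases hpX m (p.getVert_mem_support 1) (hX ⟨hum, hmv.symm⟩) with hmu | hmv'
  · exact hum.ne hmu.symm
  · exact hmv.ne hmv'

namespace KneserGraph

variable {n k : ℕ} {x u v : {A : Finset (Fin n) // A.card = k}}

theorem commonNeighbors_subset (h : u.1 ∪ v.1 = x.1ᶜ) :
    (KneserGraph n k).commonNeighbors u v ⊆ {x} := by
  rintro m ⟨⟨-, hum⟩, ⟨-, hvm⟩⟩
  have hmx : m.1 ⊆ x.1 := by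
    rw [← compl_compl x.1, ← h, subset_compl_iff_disjoint_right, disjoint_union_right]
    exact ⟨hum.symm, hvm.symm⟩
  exact Subtype.ext (eq_of_subset_of_card_le hmx (by rw [m.2, x.2]))

theorem edist_eq_two (h : u.1 ∪ v.1 = x.1ᶜ) (huv : u ≠ v) (hmeet : ¬ Disjoint u.1 v.1) :
    (KneserGraph n k).edist u v = 2 := by
  have hux : Disjoint u.1 x.1 := disjoint_compl_left.mono_left (h ▸ subset_union_left)
  have hvx : Disjoint v.1 x.1 := disjoint_compl_left.mono_left (h ▸ subset_union_right)
  refine edist_eq_two_iff.2 ⟨huv, fun hadj => hmeet hadj.2, x, ⟨?_, hux⟩, ?_, hvx⟩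
  · rintro rfl
    exact hmeet hvx.symm
  · rintro rfl
    exact hmeet hux

theorem not_isTotalMVSet_of_mem (h₁ : 2 * k + 1 ≤ n) (h₂ : n ≤ 3 * k - 1)
    {X : Set {A : Finset (Fin n) // A.card = k}} (hx : x ∈ X) :
    ¬ IsTotalMVSet (KneserGraph n k) X := by
  have hC : #x.1ᶜ = n - k := by rw [card_compl, Fintype.card_fin, x.2]
  obtain ⟨u, v, hu, hv, huv⟩ :=
    exists_card_eq_card_eq_union_eq (C := x.1ᶜ) (k := k) (by omega) (by omega)
  have hne : (⟨u, hu⟩ : {A : Finset (Fin n) // A.card = k}) ≠ ⟨v, hv⟩ := by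
    intro h
    cases h
    rw [union_self] at huv
    rw [← huv, hu] at hC
    omega
  have hmeet : ¬ Disjoint u v := fun hd => by
    have := card_union_of_disjoint hd
    rw [huv, hC, hu, hv] at this
    omega
  intro hX
  refine not_xVisible_of_edist_eq_two (edist_eq_two (x := x) huv hne hmeet) ?_ (hX ⟨u, hu⟩ ⟨v, hv⟩)
  exact (commonNeighbors_subset huv).trans (Set.singleton_subset_iff.2 hx)

end KneserGraph

theorem kneser_totalMVNumber_eq_zero_general (n k : ℕ)
    (h1 : 2 * k + 1 ≤ n) (h2 : n ≤ 3 * k - 1) :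
    totalMVNumber (KneserGraph n k) = 0 := by
  refine Nat.le_zero.1 (csSup_le' ?_)
  rintro _ ⟨X, hX, rfl⟩
  rw [Nat.le_zero, card_eq_zero, ← coe_eq_empty, Set.eq_empty_iff_forall_notMem]
  exact fun x hx => KneserGraph.not_isTotalMVSet_of_mem h1 h2 hx hX

/-- If `2k + 1 ≤ n ≤ 3k - 1` and `k ≥ 2`, the total mutual-visibility number
of `KG(n,k)` is `0`. -/
theorem kneser_totalMVNumber_eq_zero (n k : ℕ) (hk : 2 ≤ k)
    (h1 : 2 * k + 1 ≤ n) (h2 : n ≤ 3 * k - 1) :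
    totalMVNumber (KneserGraph n k) = 0 :=
  kneser_totalMVNumber_eq_zero_general n k h1 h2
end

section
/- If 2k+1 ≤ n ≤ 3k and k ≥ 2, then the total mutual-visibility number of the bipartite Kneser graph H(n,k) equals 0. -/
/-- The bipartite Kneser graph `H(n,k)`: vertices are the `k`-subsets and
`(n-k)`-subsets of `[n]`, a `k`-set being adjacent to the `(n-k)`-sets
containing it. -/
def BipKneserGraph (n k : ℕ) :
    SimpleGraph {S : Finset (Fin n) // S.card = k ∨ S.card = n - k} where
  Adj S T := S ≠ T ∧ (S.1 ⊆ T.1 ∨ T.1 ⊆ S.1)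
  symm := ⟨fun S T h => ⟨h.1.symm, h.2.symm⟩⟩
  loopless := ⟨fun S h => h.1 rfl⟩

open SimpleGraph Finset

section TotalMutualVisibility

variable {V : Type*} {G : SimpleGraph V}

/-- `x` is the centre of a convex `P₃`: a path `u - x - v` that is the only shortest
`u,v`-path. -/
def SimpleGraph.IsConvexP3Center (G : SimpleGraph V) (x : V) : Prop :=
  ∃ u v, u ≠ v ∧ ¬ G.Adj u v ∧ G.commonNeighbors u v = {x}

lemma SimpleGraph.IsConvexP3Center.map {V' : Type*} {G' : SimpleGraph V'} {x : V}
    (hx : G.IsConvexP3Center x) (e : G ≃g G') : G'.IsConvexP3Center (e x) := by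
  obtain ⟨u, v, huv, hadj, hcommon⟩ := hx
  refine ⟨e u, e v, e.injective.ne huv, by rwa [e.map_adj_iff], ?_⟩
  ext c
  obtain ⟨c, rfl⟩ := e.surjective c
  rw [mem_commonNeighbors, e.map_adj_iff, e.map_adj_iff, ← mem_commonNeighbors, hcommon,
    Set.mem_singleton_iff, Set.mem_singleton_iff, e.injective.eq_iff]

lemma IsTotalMVSet.notMem_of_isConvexP3Center {X : Set V} (hX : IsTotalMVSet G X) {x : V}
    (hx : G.IsConvexP3Center x) : x ∉ X := by
  obtain ⟨u, v, huv, hadj, hcommon⟩ := hx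
  intro hxX
  have hdist : G.dist u v = 2 := by
    simp [SimpleGraph.dist, edist_eq_two_iff.mpr ⟨huv, hadj, hcommon ▸ Set.singleton_nonempty x⟩]
  obtain ⟨p, hp, hvis⟩ := hX u v
  rw [hdist] at hp
  have hmid : p.getVert 1 = x := by
    rw [← Set.mem_singleton_iff, ← hcommon, mem_commonNeighbors]
    refine ⟨by simpa using p.adj_getVert_succ (i := 0) (by omega), ?_⟩
    simpa [← hp, p.getVert_length] using (p.adj_getVert_succ (i := 1) (by omega)).symm
  have hxuv : x ∈ G.commonNeighbors u v := hcommon ▸ rfl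
  rcases hvis x (hmid ▸ p.getVert_mem_support 1) hxX with rfl | rfl
  · exact G.notMem_commonNeighbors_left _ _ hxuv
  · exact G.notMem_commonNeighbors_right _ _ hxuv

lemma totalMVNumber_eq_zero_of_forall_isConvexP3Center [Fintype V]
    (h : ∀ x, G.IsConvexP3Center x) : totalMVNumber G = 0 := by
  refine Nat.le_zero.mp (csSup_le' ?_)
  rintro _ ⟨X, hX, rfl⟩
  simpa [Finset.eq_empty_iff_forall_notMem] using fun x => hX.notMem_of_isConvexP3Center (h x)

end TotalMutualVisibility

lemma Finset.exists_inter_eq_card_eq {α : Type*} [Fintype α] [DecidableEq α]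
    (A : Finset α) {m : ℕ} (hAm : #A ≤ m) (hm : 2 * m ≤ Fintype.card α + #A) :
    ∃ B₁ B₂ : Finset α, #B₁ = m ∧ #B₂ = m ∧ B₁ ∩ B₂ = A := by
  obtain ⟨C₁, hC₁, hC₁card⟩ := exists_subset_card_eq (s := Aᶜ) (n := m - #A)
    (by rw [card_compl]; omega)
  obtain ⟨C₂, hC₂, hC₂card⟩ := exists_subset_card_eq (s := Aᶜ \ C₁) (n := m - #A)
    (by rw [card_sdiff_of_subset hC₁, card_compl]; omega)
  have hAC₁ : Disjoint A C₁ := disjoint_left.mpr fun _ ha hc => mem_compl.mp (hC₁ hc) ha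
  have hAC₂ : Disjoint A C₂ :=
    disjoint_left.mpr fun _ ha hc => mem_compl.mp (sdiff_subset (hC₂ hc)) ha
  have hC₁₂ : Disjoint C₁ C₂ := disjoint_right.mpr fun _ hc => (mem_sdiff.mp (hC₂ hc)).2
  refine ⟨A ∪ C₁, A ∪ C₂, ?_, ?_, ?_⟩
  · rw [card_union_of_disjoint hAC₁]; omega
  · rw [card_union_of_disjoint hAC₂]; omega
  · rw [← union_inter_distrib_left, disjoint_iff_inter_eq_empty.mp hC₁₂, union_empty]

section BipKneser

variable {n k : ℕ}

lemma bipKneserGraph_adj_iff {S T} :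
    (BipKneserGraph n k).Adj S T ↔ S.1 ⊂ T.1 ∨ T.1 ⊂ S.1 := by
  simp only [BipKneserGraph, ssubset_iff_subset_ne, ne_eq, Subtype.ext_iff]
  tauto

lemma bipKneserGraph_not_adj_of_card_eq {S T} (h : #S.1 = #T.1) :
    ¬ (BipKneserGraph n k).Adj S T := by
  rw [bipKneserGraph_adj_iff]
  rintro (hST | hST) <;> have := card_lt_card hST <;> omega

lemma bipKneserGraph_ssubset_of_adj {S T} (hkn : k ≤ n - k) (hS : #S.1 = n - k)
    (h : (BipKneserGraph n k).Adj S T) : T.1 ⊂ S.1 := by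
  rcases bipKneserGraph_adj_iff.mp h with hST | hTS
  · have := card_lt_card hST
    rcases T.2 with hT | hT <;> omega
  · exact hTS

lemma bipKneserGraph_isConvexP3Center_of_card_eq (h1 : 2 * k + 1 ≤ n) (h2 : n ≤ 3 * k)
    {x : {S : Finset (Fin n) // #S = k ∨ #S = n - k}} (hx : #x.1 = k) :
    (BipKneserGraph n k).IsConvexP3Center x := by
  obtain ⟨B₁, B₂, hB₁card, hB₂card, hinter⟩ :=
    x.1.exists_inter_eq_card_eq (m := n - k) (by omega) (by rw [Fintype.card_fin]; omega)
  refine ⟨⟨B₁, .inr hB₁card⟩, ⟨B₂, .inr hB₂card⟩, ?_,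
    bipKneserGraph_not_adj_of_card_eq (hB₁card.trans hB₂card.symm), ?_⟩
  · rintro ⟨⟩
    rw [inter_self] at hinter
    subst hinter
    omega
  ext c
  rw [mem_commonNeighbors, Set.mem_singleton_iff]
  constructor
  · rintro ⟨hc₁, hc₂⟩
    have hcx : c.1 ⊆ x.1 := hinter ▸ subset_inter
      (bipKneserGraph_ssubset_of_adj (by omega) hB₁card hc₁).subset
      (bipKneserGraph_ssubset_of_adj (by omega) hB₂card hc₂).subset
    refine Subtype.ext (eq_of_subset_of_card_le hcx ?_)
    rcases c.2 with hc | hc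
    · omega
    · exact absurd hc₁ (bipKneserGraph_not_adj_of_card_eq (hB₁card.trans hc.symm))
  · rintro rfl
    have hxB₁ : c.1 ⊂ B₁ :=
      (hinter ▸ inter_subset_left).ssubset_of_ne (ne_of_apply_ne card (by omega))
    have hxB₂ : c.1 ⊂ B₂ :=
      (hinter ▸ inter_subset_right).ssubset_of_ne (ne_of_apply_ne card (by omega))
    exact ⟨bipKneserGraph_adj_iff.mpr (.inr hxB₁), bipKneserGraph_adj_iff.mpr (.inr hxB₂)⟩

def bipKneserGraphCompl (hkn : k ≤ n) : BipKneserGraph n k ≃g BipKneserGraph n k :=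
  have compl_mem (S : {S : Finset (Fin n) // #S = k ∨ #S = n - k}) :
      #S.1ᶜ = k ∨ #S.1ᶜ = n - k := by
    rw [card_compl, Fintype.card_fin]
    rcases S.2 with hS | hS <;> omega
  { toFun S := ⟨S.1ᶜ, compl_mem S⟩
    invFun S := ⟨S.1ᶜ, compl_mem S⟩
    left_inv S := by simp
    right_inv S := by simp
    map_rel_iff' := by simp [bipKneserGraph_adj_iff, or_comm] }

lemma bipKneserGraph_isConvexP3Center (h1 : 2 * k + 1 ≤ n) (h2 : n ≤ 3 * k) (x) :
    (BipKneserGraph n k).IsConvexP3Center x := by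
  rcases x.2 with hx | hx
  · exact bipKneserGraph_isConvexP3Center_of_card_eq h1 h2 hx
  · let e := bipKneserGraphCompl (n := n) (k := k) (by omega)
    have hex : #(e x).1 = k := by
      rw [show (e x).1 = x.1ᶜ from rfl, card_compl, Fintype.card_fin, hx]
      omega
    simpa using (bipKneserGraph_isConvexP3Center_of_card_eq h1 h2 hex).map e.symm

end BipKneser

theorem bipKneser_totalMVNumber_eq_zero_general (n k : ℕ)
    (h1 : 2 * k + 1 ≤ n) (h2 : n ≤ 3 * k) :
    totalMVNumber (BipKneserGraph n k) = 0 :=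
  totalMVNumber_eq_zero_of_forall_isConvexP3Center (bipKneserGraph_isConvexP3Center h1 h2)

/-- If `2k + 1 ≤ n ≤ 3k` and `k ≥ 2`, the total mutual-visibility number of
`H(n,k)` is `0`. -/
theorem bipKneser_totalMVNumber_eq_zero (n k : ℕ) (hk : 2 ≤ k)
    (h1 : 2 * k + 1 ≤ n) (h2 : n ≤ 3 * k) :
    totalMVNumber (BipKneserGraph n k) = 0 :=
  bipKneser_totalMVNumber_eq_zero_general n k h1 h2
end

section
/- Let n ≥ k+2 and k ≥ 2, and let X be a set of vertices of the Johnson graph J(n,k) such that the k-uniform hypergraph of k-sets corresponding to X contains no copy of the k-uniform suspension of C₄. Then X is a total mutual-visibility set in J(n,k). Consequently μₜ(J(n,k)) equals the Turán number ex_k(n, C₄^{k+}). -/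
/-- The Johnson graph `J(n,k)`: vertices are the `k`-subsets of `[n]`,
adjacent iff their intersection has `k - 1` elements. -/
def JohnsonGraph (n k : ℕ) : SimpleGraph {A : Finset (Fin n) // A.card = k} where
  Adj A B := A ≠ B ∧ (A.1 ∩ B.1).card = k - 1
  symm := ⟨fun A B h => ⟨h.1.symm, by rw [Finset.inter_comm]; exact h.2⟩⟩
  loopless := ⟨fun A h => h.1 rfl⟩

/-- A hypergraph `E` contains a copy of the `k`-uniform suspension of the
4-cycle `C₄`. -/
def HasC4Susp {α : Type*} [DecidableEq α] (k : ℕ) (E : Finset (Finset α)) : Prop :=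
  ∃ (Y : Finset α) (z₁ z₂ z₃ z₄ : α),
    Y.card = k - 2 ∧
    z₁ ≠ z₂ ∧ z₁ ≠ z₃ ∧ z₁ ≠ z₄ ∧ z₂ ≠ z₃ ∧ z₂ ≠ z₄ ∧ z₃ ≠ z₄ ∧
    z₁ ∉ Y ∧ z₂ ∉ Y ∧ z₃ ∉ Y ∧ z₄ ∉ Y ∧
    insert z₁ (insert z₂ Y) ∈ E ∧ insert z₂ (insert z₃ Y) ∈ E ∧
    insert z₃ (insert z₄ Y) ∈ E ∧ insert z₄ (insert z₁ Y) ∈ E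

/-- The Turán number `ex_k(n, C₄^{k+})`: the maximum number of edges of a
`k`-uniform hypergraph on `n` vertices with no copy of the `k`-uniform
suspension of `C₄`. -/
noncomputable def exC4Susp (n k : ℕ) : ℕ :=
  sSup {m | ∃ E : Finset (Finset (Fin n)),
    (∀ e ∈ E, e.card = k) ∧ ¬ HasC4Susp k E ∧ E.card = m}


/-! In `J(n,k)` the distance is `|A \ B|`, and a first step of a geodesic from `A` to `B` is a
swap `A - a + b` with `a ∈ A \ B`, `b ∈ B \ A`. When `|A \ B| ≥ 2`, two choices of `a` and two of
`b` give four swaps forming a copy of `C₄^{k+}`, so a geodesic can always step outside a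
`C₄^{k+}`-free set `X`. Conversely, the diagonals `Y ∪ {z₁, z₃}` and `Y ∪ {z₂, z₄}` of a copy of
`C₄^{k+}` are at distance two, and their only common neighbours are its four edges. -/

open Finset SimpleGraph

section Visibility

variable {V : Type*} {G : SimpleGraph V} {X : Set V}

lemma XVisible.of_adj {u v : V} (h : G.Adj u v) : XVisible G X u v :=
  ⟨.cons h .nil, by simp [dist_eq_one_iff_adj.2 h], by simp +contextual⟩

lemma XVisible.exists_adj_adj_notMem {u v : V} (h : XVisible G X u v)
    (huv : G.dist u v = 2) : ∃ c, G.Adj u c ∧ G.Adj c v ∧ c ∉ X := by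
  obtain ⟨p, hp, hpX⟩ := h
  rw [huv] at hp
  match p, hp with
  | .cons (v := c) huc (.cons hcv .nil), _ =>
    refine ⟨c, huc, hcv, fun hc => ?_⟩
    rcases hpX c (by simp) hc with rfl | rfl
    exacts [huc.ne rfl, hcv.ne rfl]

lemma isTotalMVSet_of_forall_exists_adj (hG : G.Preconnected)
    (h : ∀ u v, 2 ≤ G.dist u v → ∃ c, G.Adj u c ∧ c ∉ X ∧ G.dist c v + 1 = G.dist u v) :
    IsTotalMVSet G X := by
  suffices ∀ d u v, G.dist u v = d → XVisible G X u v from fun u v => this _ u v rfl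
  intro d
  induction d with
  | zero =>
    intro u v huv
    obtain rfl := ((hG u v).dist_eq_zero_iff).1 huv
    exact ⟨.nil, by simp, by simp⟩
  | succ d ih =>
    intro u v huv
    rcases d with _ | d
    · exact .of_adj (dist_eq_one_iff_adj.1 huv)
    obtain ⟨c, huc, hcX, hcv⟩ := h u v (by omega)
    obtain ⟨p, hp, hpX⟩ := ih c v (by omega)
    refine ⟨.cons huc p, by simp [hp, hcv], fun w hw hwX => ?_⟩
    rcases List.mem_cons.1 (Walk.support_cons huc p ▸ hw) with rfl | hw
    · exact .inl rfl
    · exact .inr ((hpX w hw hwX).resolve_left fun hwc => hcX (hwc ▸ hwX))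

end Visibility

section Hypergraph

variable {α : Type*} [DecidableEq α]

/-- The four sets form the suspension of the cycle `a₁ b₁ a₂ b₂` over `A \ {a₁, a₂}`. -/
lemma hasC4Susp_of_insert_erase_mem {E : Finset (Finset α)} {A : Finset α} {a₁ a₂ b₁ b₂ : α}
    (ha₁ : a₁ ∈ A) (ha₂ : a₂ ∈ A) (hb₁ : b₁ ∉ A) (hb₂ : b₂ ∉ A) (ha : a₁ ≠ a₂) (hb : b₁ ≠ b₂)
    (hE : ∀ a ∈ ({a₁, a₂} : Finset α), ∀ b ∈ ({b₁, b₂} : Finset α), insert b (A.erase a) ∈ E) :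
    HasC4Susp #A E := by
  have hne : ∀ a ∈ A, ∀ b ∉ A, a ≠ b := fun a ha b hb hab => hb (hab ▸ ha)
  have h₁ : insert a₁ ((A.erase a₁).erase a₂) = A.erase a₂ := by
    rw [erase_right_comm, insert_erase (mem_erase.2 ⟨ha, ha₁⟩)]
  have h₂ : insert a₂ ((A.erase a₁).erase a₂) = A.erase a₁ :=
    insert_erase (mem_erase.2 ⟨ha.symm, ha₂⟩)
  refine ⟨(A.erase a₁).erase a₂, a₁, b₁, a₂, b₂, ?_, hne _ ha₁ _ hb₁, ha, hne _ ha₁ _ hb₂,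
    (hne _ ha₂ _ hb₁).symm, hb, hne _ ha₂ _ hb₂, by simp, by simp [hb₁], by simp,
    by simp [hb₂], ?_, ?_, ?_, ?_⟩
  · rw [card_erase_of_mem (mem_erase.2 ⟨ha.symm, ha₂⟩), card_erase_of_mem ha₁]
    omega
  · rw [insert_comm, h₁]
    exact hE a₂ (by simp) b₁ (by simp)
  · rw [h₂]
    exact hE a₁ (by simp) b₁ (by simp)
  · rw [insert_comm, h₂]
    exact hE a₁ (by simp) b₂ (by simp)
  · rw [h₁]
    exact hE a₂ (by simp) b₂ (by simp)

lemma eq_insert_erase_of_sdiff_eq_singleton {s t : Finset α} {x y : α} (hx : s \ t = {x})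
    (hy : t \ s = {y}) : t = insert y (s.erase x) := by
  ext z
  have hxz := congrArg (z ∈ ·) hx
  have hyz := congrArg (z ∈ ·) hy
  simp only [mem_sdiff, mem_singleton, eq_iff_iff] at hxz hyz
  simp only [mem_insert, mem_erase]
  grind

end Hypergraph

namespace JohnsonGraph

variable {n k : ℕ} {A B C : {A : Finset (Fin n) // A.card = k}}

lemma eq_iff_card_sdiff_eq_zero : A = B ↔ #(A.1 \ B.1) = 0 := by
  rw [card_eq_zero, sdiff_eq_empty_iff_subset, Subtype.ext_iff]
  exact ⟨fun h => h.subset, fun h => eq_of_subset_of_card_le h (by rw [A.2, B.2])⟩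

lemma adj_iff_card_sdiff_eq_one : (JohnsonGraph n k).Adj A B ↔ #(A.1 \ B.1) = 1 := by
  have hcard := card_sdiff_add_card_inter A.1 B.1
  have hne : A ≠ B ↔ #(A.1 \ B.1) ≠ 0 := eq_iff_card_sdiff_eq_zero.not
  change A ≠ B ∧ #(A.1 ∩ B.1) = k - 1 ↔ _
  rw [hne, A.2] at *
  omega

def swap (A : {A : Finset (Fin n) // A.card = k}) {a b : Fin n} (ha : a ∈ A.1) (hb : b ∉ A.1) :
    {A : Finset (Fin n) // A.card = k} :=
  ⟨insert b (A.1.erase a), by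
    rw [card_insert_of_notMem fun h => hb (mem_of_mem_erase h), card_erase_add_one ha, A.2]⟩

variable {a b : Fin n}

lemma adj_swap (ha : a ∈ A.1) (hb : b ∉ A.1) : (JohnsonGraph n k).Adj A (swap A ha hb) := by
  rw [adj_iff_card_sdiff_eq_one, card_eq_one]
  refine ⟨a, ?_⟩
  ext x
  simp only [swap, mem_sdiff, mem_insert, mem_erase, mem_singleton]
  grind

lemma card_swap_sdiff_add_one (ha : a ∈ A.1) (hb : b ∉ A.1) (haB : a ∉ B.1) (hbB : b ∈ B.1) :
    #((swap A ha hb).1 \ B.1) + 1 = #(A.1 \ B.1) := by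
  have : (swap A ha hb).1 \ B.1 = (A.1 \ B.1).erase a := by
    ext x
    simp only [swap, mem_sdiff, mem_insert, mem_erase]
    grind
  rw [this, card_erase_add_one (mem_sdiff.2 ⟨ha, haB⟩)]

lemma exists_walk_length_eq_card_sdiff (A B : {A : Finset (Fin n) // A.card = k}) :
    ∃ p : (JohnsonGraph n k).Walk A B, p.length = #(A.1 \ B.1) := by
  induction h : #(A.1 \ B.1) generalizing A with
  | zero =>
    obtain rfl := eq_iff_card_sdiff_eq_zero.2 h
    exact ⟨.nil, rfl⟩
  | succ d ih =>
    obtain ⟨a, ha⟩ := card_pos.1 (by omega : 0 < #(A.1 \ B.1))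
    obtain ⟨b, hb⟩ := card_pos.1
      (by rw [← card_sdiff_comm (A.2.trans B.2.symm)]; omega : 0 < #(B.1 \ A.1))
    rw [mem_sdiff] at ha hb
    have hd := card_swap_sdiff_add_one ha.1 hb.2 ha.2 hb.1
    obtain ⟨p, hp⟩ := ih (swap A ha.1 hb.2) (by omega)
    exact ⟨.cons (adj_swap ha.1 hb.2) p, by simp [hp]⟩

lemma card_sdiff_le_length (p : (JohnsonGraph n k).Walk A B) : #(A.1 \ B.1) ≤ p.length := by
  induction p with
  | nil => simp
  | @cons u C B h p ih =>
    calc #(u.1 \ B.1) ≤ #((u.1 \ C.1) ∪ (C.1 \ B.1)) := card_le_card (sdiff_triangle _ _ _)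
      _ ≤ #(u.1 \ C.1) + #(C.1 \ B.1) := card_union_le _ _
      _ ≤ p.length + 1 := by rw [adj_iff_card_sdiff_eq_one.1 h]; omega
      _ = (Walk.cons h p).length := rfl

lemma dist_eq_card_sdiff (A B : {A : Finset (Fin n) // A.card = k}) :
    (JohnsonGraph n k).dist A B = #(A.1 \ B.1) := by
  obtain ⟨p, hp⟩ := exists_walk_length_eq_card_sdiff A B
  obtain ⟨q, hq⟩ := (Walk.reachable p).exists_walk_length_eq_dist
  exact le_antisymm (hp ▸ dist_le p) (hq ▸ card_sdiff_le_length q)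

lemma preconnected : (JohnsonGraph n k).Preconnected := fun A B =>
  (exists_walk_length_eq_card_sdiff A B).elim fun p _ => p.reachable

lemma exists_adj_notMem_of_not_hasC4Susp {X : Finset {A : Finset (Fin n) // A.card = k}}
    (hX : ¬ HasC4Susp k (X.image Subtype.val)) (hAB : 2 ≤ #(A.1 \ B.1)) :
    ∃ C, (JohnsonGraph n k).Adj A C ∧ C ∉ X ∧ #(C.1 \ B.1) + 1 = #(A.1 \ B.1) := by
  obtain ⟨a₁, ha₁, a₂, ha₂, ha⟩ := one_lt_card.1 (by omega : 1 < #(A.1 \ B.1))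
  obtain ⟨b₁, hb₁, b₂, hb₂, hb⟩ := one_lt_card.1
    (by rw [← card_sdiff_comm (A.2.trans B.2.symm)]; omega : 1 < #(B.1 \ A.1))
  have hsub : {a₁, a₂} ⊆ A.1 \ B.1 := insert_subset ha₁ (singleton_subset_iff.2 ha₂)
  have hsub' : {b₁, b₂} ⊆ B.1 \ A.1 := insert_subset hb₁ (singleton_subset_iff.2 hb₂)
  by_contra! hall
  have hE : ∀ a ∈ ({a₁, a₂} : Finset (Fin n)), ∀ b ∈ ({b₁, b₂} : Finset (Fin n)),
      insert b (A.1.erase a) ∈ X.image Subtype.val := fun a ha b hb => by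
    obtain ⟨haA, haB⟩ := mem_sdiff.1 (hsub ha)
    obtain ⟨hbB, hbA⟩ := mem_sdiff.1 (hsub' hb)
    by_contra hC
    exact hall (swap A haA hbA) (adj_swap haA hbA) (fun h => hC (mem_image_of_mem _ h))
      (card_swap_sdiff_add_one haA hbA haB hbB)
  have := hasC4Susp_of_insert_erase_mem (mem_sdiff.1 ha₁).1 (mem_sdiff.1 ha₂).1
    (mem_sdiff.1 hb₁).2 (mem_sdiff.1 hb₂).2 ha hb hE
  rw [A.2] at this
  exact hX this

theorem isTotalMVSet_of_not_hasC4Susp {X : Finset {A : Finset (Fin n) // A.card = k}}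
    (hX : ¬ HasC4Susp k (X.image Subtype.val)) : IsTotalMVSet (JohnsonGraph n k) ↑X :=
  isTotalMVSet_of_forall_exists_adj preconnected fun u v huv => by
    simp only [dist_eq_card_sdiff] at huv ⊢
    exact exists_adj_notMem_of_not_hasC4Susp hX huv

lemma sdiff_union_sdiff_eq_of_adj_of_adj {u v : {A : Finset (Fin n) // A.card = k}}
    (huv : #(u.1 \ v.1) = 2) (hu : (JohnsonGraph n k).Adj u C) (hv : (JohnsonGraph n k).Adj C v) :
    (u.1 \ C.1) ∪ (C.1 \ v.1) = u.1 \ v.1 := by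
  refine (eq_of_subset_of_card_le (sdiff_triangle _ _ _) ?_).symm
  calc #((u.1 \ C.1) ∪ (C.1 \ v.1)) ≤ #(u.1 \ C.1) + #(C.1 \ v.1) := card_union_le _ _
    _ = #(u.1 \ v.1) := by rw [adj_iff_card_sdiff_eq_one.1 hu, adj_iff_card_sdiff_eq_one.1 hv, huv]

lemma exists_eq_insert_erase_of_adj_of_adj {u v : {A : Finset (Fin n) // A.card = k}}
    (huv : #(u.1 \ v.1) = 2) (hu : (JohnsonGraph n k).Adj u C) (hv : (JohnsonGraph n k).Adj C v) :
    ∃ x ∈ u.1 \ v.1, ∃ y ∈ v.1 \ u.1, C.1 = insert y (u.1.erase x) := by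
  have hvu : #(v.1 \ u.1) = 2 := card_sdiff_comm (u.2.trans v.2.symm) ▸ huv
  obtain ⟨x, hx⟩ := card_eq_one.1 (adj_iff_card_sdiff_eq_one.1 hu)
  obtain ⟨y, hy⟩ := card_eq_one.1 (adj_iff_card_sdiff_eq_one.1 hu.symm)
  refine ⟨x, ?_, y, ?_, eq_insert_erase_of_sdiff_eq_singleton hx hy⟩
  · rw [← sdiff_union_sdiff_eq_of_adj_of_adj huv hu hv, hx]
    exact mem_union_left _ (mem_singleton_self x)
  · rw [← sdiff_union_sdiff_eq_of_adj_of_adj hvu hv.symm hu.symm, hy]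
    exact mem_union_right _ (mem_singleton_self y)

theorem not_hasC4Susp_of_isTotalMVSet {X : Finset {A : Finset (Fin n) // A.card = k}}
    (hX : IsTotalMVSet (JohnsonGraph n k) ↑X) : ¬ HasC4Susp k (X.image Subtype.val) := by
  rintro ⟨Y, z₁, z₂, z₃, z₄, -, h₁₂, h₁₃, h₁₄, h₂₃, h₂₄, h₃₄, hz₁, hz₂, hz₃, hz₄, e₁, e₂, e₃, e₄⟩
  -- reading `#Y` off an edge avoids the truncated subtraction in `#Y = k - 2`
  have hk : #Y + 2 = k := by
    obtain ⟨w, -, hw⟩ := mem_image.1 e₁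
    rw [← w.2, hw, card_insert_of_notMem (by simp [h₁₂, hz₁]), card_insert_of_notMem hz₂]
  have hcard : ∀ {a b}, a ≠ b → a ∉ Y → b ∉ Y → #(insert a (insert b Y)) = k :=
    fun hab ha hb => by
      rw [card_insert_of_notMem (by simp [hab, ha]), card_insert_of_notMem hb, ← hk]
  let u : {A : Finset (Fin n) // A.card = k} := ⟨_, hcard h₁₃ hz₁ hz₃⟩
  let v : {A : Finset (Fin n) // A.card = k} := ⟨_, hcard h₂₄ hz₂ hz₄⟩
  have huv : u.1 \ v.1 = {z₁, z₃} := by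
    ext x
    simp only [u, v, mem_sdiff, mem_insert, mem_singleton]
    grind
  have hvu : v.1 \ u.1 = {z₂, z₄} := by
    ext x
    simp only [u, v, mem_sdiff, mem_insert, mem_singleton]
    grind
  obtain ⟨C, hu, hv, hCX⟩ := (hX u v).exists_adj_adj_notMem
    (by rw [dist_eq_card_sdiff, huv, card_pair h₁₃])
  obtain ⟨x, hx, y, hy, hC⟩ :=
    exists_eq_insert_erase_of_adj_of_adj (by rw [huv, card_pair h₁₃]) hu hv
  rw [huv, mem_insert, mem_singleton] at hx
  rw [hvu, mem_insert, mem_singleton] at hy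
  have hu₁ : u.1.erase z₁ = insert z₃ Y := erase_insert (by simp [h₁₃, hz₁])
  have hu₃ : u.1.erase z₃ = insert z₁ Y := by rw [erase_insert_of_ne h₁₃, erase_insert hz₃]
  have hCE : C.1 ∈ X.image Subtype.val := by
    rcases hx with rfl | rfl <;> rcases hy with rfl | rfl
    · rwa [hC, hu₁]
    · rwa [hC, hu₁, insert_comm]
    · rwa [hC, hu₃, insert_comm]
    · rwa [hC, hu₃]
  obtain ⟨w, hw, hwC⟩ := mem_image.1 hCE
  exact hCX (Subtype.ext hwC ▸ hw)

end JohnsonGraph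

theorem johnson_totalMVNumber_general (n k : ℕ) :
    (∀ X : Finset {A : Finset (Fin n) // A.card = k},
      ¬ HasC4Susp k (X.image fun v => v.1) →
        IsTotalMVSet (JohnsonGraph n k) ↑X) ∧
    totalMVNumber (JohnsonGraph n k) = exC4Susp n k := by
  refine ⟨fun X => JohnsonGraph.isTotalMVSet_of_not_hasC4Susp, congrArg sSup ?_⟩
  ext m
  constructor
  · rintro ⟨X, hX, rfl⟩
    exact ⟨X.image Subtype.val, forall_mem_image.2 fun w _ => w.2,
      JohnsonGraph.not_hasC4Susp_of_isTotalMVSet hX,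
      card_image_of_injective X Subtype.val_injective⟩
  · rintro ⟨E, hE, hEC4, rfl⟩
    have hE' : (E.subtype (·.card = k)).image Subtype.val = E := by
      simpa [map_eq_image] using subtype_map_of_mem hE
    refine ⟨E.subtype (·.card = k), JohnsonGraph.isTotalMVSet_of_not_hasC4Susp (by rwa [hE']), ?_⟩
    rw [card_subtype, filter_true_of_mem hE]

/-- If the hypergraph of `k`-sets corresponding to `X` contains no copy of the
`k`-uniform suspension of `C₄`, then `X` is a total mutual-visibility set of
`J(n,k)`; consequently the total mutual-visibility number of `J(n,k)` equals
the Turán number `ex_k(n, C₄^{k+})`. -/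
theorem johnson_totalMVNumber (n k : ℕ) (hk : 2 ≤ k) (hn : k + 2 ≤ n) :
    (∀ X : Finset {A : Finset (Fin n) // A.card = k},
      ¬ HasC4Susp k (X.image fun v => v.1) →
        IsTotalMVSet (JohnsonGraph n k) ↑X) ∧
    totalMVNumber (JohnsonGraph n k) = exC4Susp n k :=
  johnson_totalMVNumber_general n k
end
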